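/- If T is an n-quasi-m-isometry, then Δ_{m-1,n}(T, T^k x) = Δ_{m-1,n}(T, x) for every positive integer k and every x ∈ H, where Δ_{m,n}(T,x) = sum_{j=0}^m (-1)^{m-j} binom(m,j) ||T^{j+n}x||². -/

import Mathlib

variable {H : Type*} [NormedAddCommGroup H] [InnerProductSpace ℂ H] [CompleteSpace H]

/-- `Δ_{m,n}(T,x) = ∑_{k=0}^m (-1)^{m-k} C(m,k) ‖T^{k+n} x‖²`. -/
noncomputable def DeltaQ (T : H →L[ℂ] H) (m n : ℕ) (x : H) : ℝ :=
  ∑ k ∈ Finset.range (m + 1),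
    (-1 : ℝ) ^ (m - k) * (m.choose k : ℝ) * ‖(T ^ (k + n)) x‖ ^ 2

/-!
`Δ_{m,n}(T,x)` is the `m`-th forward difference at `n` of the sequence `j ↦ ‖T^j x‖²`, so
`Δ_{m,n}(T,x) = Δ_{m-1,n}(T,Tx) - Δ_{m-1,n}(T,x)`. If the left side vanishes for all `x`, then
`Δ_{m-1,n}(T,·)` is invariant under `T`, hence under every power of `T`.
-/

section

omit [CompleteSpace H]

lemma DeltaQ_eq_fwdDiff_iter (T : H →L[ℂ] H) (m n : ℕ) (x : H) :
    DeltaQ T m n x = (fwdDiff 1)^[m] (fun j ↦ ‖(T ^ j) x‖ ^ 2) n := by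
  rw [fwdDiff_iter_eq_sum_shift, DeltaQ]
  refine Finset.sum_congr rfl fun k _ ↦ ?_
  simp [zsmul_eq_mul, Nat.add_comm n k, mul_assoc]

lemma DeltaQ_succ (T : H →L[ℂ] H) (m n : ℕ) (x : H) :
    DeltaQ T (m + 1) n x = DeltaQ T m (n + 1) x - DeltaQ T m n x := by
  simp only [DeltaQ_eq_fwdDiff_iter, Function.iterate_succ_apply', fwdDiff]

lemma DeltaQ_apply_self (T : H →L[ℂ] H) (m n : ℕ) (x : H) :
    DeltaQ T m n (T x) = DeltaQ T m (n + 1) x := by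
  simp only [DeltaQ, ← mul_apply_eq_comp, ← pow_succ, Nat.add_assoc]

lemma DeltaQ_comp_eq_of_DeltaQ_succ_eq_zero {T : H →L[ℂ] H} {m n : ℕ}
    (hT : ∀ x, DeltaQ T (m + 1) n x = 0) : DeltaQ T m n ∘ T = DeltaQ T m n := by
  ext x
  rw [Function.comp_apply, DeltaQ_apply_self, ← sub_eq_zero, ← DeltaQ_succ, hT]

end

theorem DeltaQ_invariant_of_nQuasiMIsometry_general (T : H →L[ℂ] H) (m n : ℕ)
    (hm : 1 ≤ m) (hT : ∀ x : H, DeltaQ T m n x = 0) :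
    ∀ (k : ℕ), 1 ≤ k → ∀ x : H, DeltaQ T (m - 1) n ((T ^ k) x) = DeltaQ T (m - 1) n x := by
  obtain ⟨m, rfl⟩ := Nat.exists_eq_add_of_le' hm
  intro k _ x
  rw [Nat.add_sub_cancel, pow_apply_eq_iterate]
  exact congrFun (Function.iterate_invariant (DeltaQ_comp_eq_of_DeltaQ_succ_eq_zero hT) k) x

theorem DeltaQ_invariant_of_nQuasiMIsometry (T : H →L[ℂ] H) (m n : ℕ)
    (hm : 1 ≤ m) (hn : 1 ≤ n) (hT : ∀ x : H, DeltaQ T m n x = 0) :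
    ∀ (k : ℕ), 1 ≤ k → ∀ x : H, DeltaQ T (m - 1) n ((T ^ k) x) = DeltaQ T (m - 1) n x :=
  DeltaQ_invariant_of_nQuasiMIsometry_general T m n hm hT
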